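/- arXiv:1612.04422 — 6 statements merged into one kernel-verified Lean document; each statement's English description precedes it below -/
import Mathlib

section
/- Let ℓ ≥ 1 be an integer and let y₁,…,y_ℓ ∈ ℂ. The 2×ℓ complex matrix with first row (y₁,y₂,…,y_ℓ) and second row (y₂,y₃,…,y_ℓ,y₁) has rank at most 1 if and only if there exists c ∈ ℂ with c^ℓ = 1 such that y_j = c^{ℓ+1−j}·y₁ for every j with 2 ≤ j ≤ ℓ. -/
/-! Rank at most one means the two rows are dependent; since the first row `y` may be assumed
nonzero, the cyclic shift of `y` is `a • y`. Following the shift around the cycle gives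
`y k = a ^ k * y 0` and `a ^ ℓ = 1`, and `c = a⁻¹` gives the stated relation because
`c ^ (ℓ - k) = a ^ k` for an `ℓ`-th root of unity. -/

theorem Matrix.rank_of_two_rows_le_one_iff {K n : Type*} [Field K] [Fintype n] {u v : n → K}
    (hu : u ≠ 0) : (Matrix.of ![u, v]).rank ≤ 1 ↔ ∃ a : K, a • u = v := by
  rw [rank_eq_finrank_span_row, ← not_lt, Nat.lt_iff_add_one_le, one_add_one_eq_two,
    ← Fintype.card_fin 2, ← Set.finrank, ← linearIndependent_iff_card_le_finrank_span]
  simpa using (LinearIndependent.pair_iff' hu).not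

theorem Fin.forall_add_one_eq_mul_iff {M : Type*} [Monoid M] {n : ℕ} {y : Fin (n + 1) → M}
    {a : M} : (∀ k : Fin (n + 1), y (k + 1) = a * y k) ↔
      (∀ k : Fin (n + 1), y k = a ^ (k : ℕ) * y 0) ∧ a ^ (n + 1) * y 0 = y 0 := by
  constructor
  · intro hstep
    have geom : ∀ k : Fin (n + 1), y k = a ^ (k : ℕ) * y 0 := by
      refine Fin.induction (by simp) fun i hi => ?_
      rw [Fin.val_succ, ← Fin.coeSucc_eq_succ, hstep, hi, Fin.val_castSucc, pow_succ', mul_assoc]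
    refine ⟨geom, ?_⟩
    calc a ^ (n + 1) * y 0 = a * y (Fin.last n) := by
          rw [geom (Fin.last n), Fin.val_last, pow_succ', mul_assoc]
      _ = y 0 := by rw [← hstep, Fin.last_add_one]
  · rintro ⟨geom, hperiod⟩ k
    induction k using Fin.lastCases with
    | last =>
      rw [Fin.last_add_one, geom (Fin.last n), Fin.val_last, ← mul_assoc, ← pow_succ', hperiod]
    | cast i =>
      rw [Fin.coeSucc_eq_succ, geom i.succ, geom i.castSucc, Fin.val_succ, Fin.val_castSucc,
        pow_succ', mul_assoc]

theorem Fin.exists_forall_add_one_eq_mul_iff {M : Type*} [MonoidWithZero M]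
    [IsRightCancelMulZero M] {n : ℕ} {y : Fin (n + 1) → M} (hy : y ≠ 0) :
    (∃ a : M, ∀ k : Fin (n + 1), y (k + 1) = a * y k) ↔
      ∃ a : M, a ^ (n + 1) = 1 ∧ ∀ k : Fin (n + 1), y k = a ^ (k : ℕ) * y 0 := by
  simp_rw [Fin.forall_add_one_eq_mul_iff]
  refine exists_congr fun a => ⟨fun ⟨geom, hperiod⟩ => ⟨?_, geom⟩,
    fun ⟨ha, geom⟩ => ⟨geom, by rw [ha, one_mul]⟩⟩
  have hy0 : y 0 ≠ 0 := fun h0 => hy (funext fun k => by rw [geom k, h0, mul_zero, Pi.zero_apply])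
  exact mul_right_cancel₀ hy0 (hperiod.trans (one_mul _).symm)

theorem pow_sub_eq_inv_pow_of_pow_eq_one {G₀ : Type*} [GroupWithZero G₀] {c : G₀}
    {ℓ j : ℕ} (hc : c ^ ℓ = 1) (hj : j ≤ ℓ) : c ^ (ℓ - j) = c⁻¹ ^ j := by
  rcases eq_or_ne c 0 with rfl | hc0
  · obtain rfl : ℓ = 0 := by by_contra hℓ; simp [zero_pow hℓ] at hc
    obtain rfl : j = 0 := by omega
    simp
  · rw [pow_sub₀ c hc0 hj, hc, one_mul, inv_pow]

theorem Fin.exists_pow_eq_one_forall_eq_pow_mul_iff {G₀ : Type*} [GroupWithZero G₀] {n : ℕ}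
    {y : Fin (n + 1) → G₀} :
    (∃ a : G₀, a ^ (n + 1) = 1 ∧ ∀ k : Fin (n + 1), y k = a ^ (k : ℕ) * y 0) ↔
      ∃ c : G₀, c ^ (n + 1) = 1 ∧
        ∀ j : Fin (n + 1), j ≠ 0 → y j = c ^ (n + 1 - j) * y 0 := by
  constructor
  · rintro ⟨a, ha, geom⟩
    have ha' : a⁻¹ ^ (n + 1) = 1 := by rw [inv_pow, ha, inv_one]
    exact ⟨a⁻¹, ha', fun j _ => by
      rw [geom, pow_sub_eq_inv_pow_of_pow_eq_one ha' j.is_lt.le, inv_inv]⟩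
  · rintro ⟨c, hc, hrel⟩
    refine ⟨c⁻¹, by rw [inv_pow, hc, inv_one], fun j => ?_⟩
    rcases eq_or_ne j 0 with rfl | hj
    · simp
    · rw [hrel j hj, pow_sub_eq_inv_pow_of_pow_eq_one hc j.is_lt.le]

/-- Let `ℓ ≥ 1` and `y₁,…,y_ℓ ∈ ℂ` (indexed from `0`, so `y ⟨0,_⟩` is `y₁`). The `2 × ℓ`
matrix with rows `(y₁,…,y_ℓ)` and `(y₂,…,y_ℓ,y₁)` has rank at most `1` iff there is `c ∈ ℂ`
with `c^ℓ = 1` such that `y_j = c^{ℓ+1−j}·y₁` for all `2 ≤ j ≤ ℓ` (in `0`-based indexing: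
`y j = c^{ℓ−j}·y 0` for all `j ≠ 0`). -/
theorem rank_le_one_iff_cyclic_relation (ℓ : ℕ) (hℓ : 1 ≤ ℓ) (y : Fin ℓ → ℂ) :
    (Matrix.of ![fun k : Fin ℓ => y k,
        fun k : Fin ℓ => y ⟨((k : ℕ) + 1) % ℓ, Nat.mod_lt _ hℓ⟩]).rank ≤ 1 ↔
    ∃ c : ℂ, c ^ ℓ = 1 ∧
      ∀ j : Fin ℓ, j ≠ ⟨0, hℓ⟩ → y j = c ^ (ℓ - (j : ℕ)) * y ⟨0, hℓ⟩ := by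
  obtain ⟨n, rfl⟩ : ∃ n, ℓ = n + 1 := ⟨ℓ - 1, by omega⟩
  have hshift : (fun k : Fin (n + 1) => y ⟨((k : ℕ) + 1) % (n + 1), Nat.mod_lt _ hℓ⟩) =
      fun k => y (k + 1) := by
    funext k
    congr 1
    ext
    simp [Fin.val_add]
  have hzero : (⟨0, hℓ⟩ : Fin (n + 1)) = 0 := rfl
  rw [hshift, hzero, ← Fin.exists_pow_eq_one_forall_eq_pow_mul_iff]
  rcases eq_or_ne y 0 with rfl | hy
  · refine ⟨fun _ => ⟨1, one_pow _, fun _ => by simp⟩, fun _ => ?_⟩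
    simp [← Pi.zero_def, ← Matrix.zero_empty]
  · simp_rw [← Fin.exists_forall_add_one_eq_mul_iff hy, Matrix.rank_of_two_rows_le_one_iff hy,
      funext_iff, Pi.smul_apply, smul_eq_mul, eq_comm]
end

section
/- With notation as in the context, A = ⋃_{c ∈ ℂ, c^ℓ = 1} { (y,x) ∈ ℂⁿ × ℂ^{n+1} : y_j = c^{ℓ+1−j}·y₁ for all 2 ≤ j ≤ ℓ, x_{n+1} = 0, and y₁·L_c(x) = 0 }. -/
noncomputable section

/-- `P(y,x) = y₁x₁ + ⋯ + y_ℓx_ℓ + x_{n+1}²` (coordinates indexed from `0`). -/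
def Ppoly (n ℓ : ℕ) (hn : ℓ ≤ n) (y : Fin n → ℂ) (x : Fin (n + 1) → ℂ) : ℂ :=
  (∑ k : Fin ℓ, y (Fin.castLE hn k) * x (Fin.castLE (hn.trans n.le_succ) k)) +
    x (Fin.last n) ^ 2

/-- `Q(y,x) = y₂x₁ + y₃x₂ + ⋯ + y_ℓx_{ℓ−1} + y₁x_ℓ` (for `ℓ = 1`, `Q = y₁x₁`), written as
`∑_{k=1}^{ℓ} y_{σ(k)} x_k` with `σ` the cyclic shift of `{1,…,ℓ}`. -/
def Qpoly (n ℓ : ℕ) (h1 : 1 ≤ ℓ) (hn : ℓ ≤ n) (y : Fin n → ℂ) (x : Fin (n + 1) → ℂ) : ℂ :=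
  ∑ k : Fin ℓ, y (Fin.castLE hn ⟨((k : ℕ) + 1) % ℓ, Nat.mod_lt _ h1⟩) *
    x (Fin.castLE (hn.trans n.le_succ) k)

/-- The `2 × ℓ` matrix `D_y` with rows `(y₁,…,y_ℓ)` and `(y₂,…,y_ℓ,y₁)`. -/
def Dmat (n ℓ : ℕ) (h1 : 1 ≤ ℓ) (hn : ℓ ≤ n) (y : Fin n → ℂ) : Matrix (Fin 2) (Fin ℓ) ℂ :=
  Matrix.of ![fun k => y (Fin.castLE hn k),
    fun k => y (Fin.castLE hn ⟨((k : ℕ) + 1) % ℓ, Nat.mod_lt _ h1⟩)]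

/-- `L_c(x) = ∑_{k=1}^{ℓ} c^{ℓ+1−k}·x_k` (in `0`-based indexing, `∑_k c^{ℓ−k} x_k`). -/
def Lpoly (n ℓ : ℕ) (hn : ℓ ≤ n) (c : ℂ) (x : Fin (n + 1) → ℂ) : ℂ :=
  ∑ k : Fin ℓ, c ^ (ℓ - (k : ℕ)) * x (Fin.castLE (hn.trans n.le_succ) k)

/-- The space `X = {P = 0, Q = 0} ⊆ ℂⁿ × ℂ^{n+1}` of Example 2.3. -/
def Xset (n ℓ : ℕ) (h1 : 1 ≤ ℓ) (hn : ℓ ≤ n) : Set ((Fin n → ℂ) × (Fin (n + 1) → ℂ)) :=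
  {p | Ppoly n ℓ hn p.1 p.2 = 0 ∧ Qpoly n ℓ h1 hn p.1 p.2 = 0}

/-- The locus `A = {(y,x) ∈ X : rank D_y ≤ 1}`. -/
def Aset (n ℓ : ℕ) (h1 : 1 ≤ ℓ) (hn : ℓ ≤ n) : Set ((Fin n → ℂ) × (Fin (n + 1) → ℂ)) :=
  {p ∈ Xset n ℓ h1 hn | (Dmat n ℓ h1 hn p.1).rank ≤ 1}

namespace AsetAux

variable {n ℓ : ℕ}

lemma cpow_step {c : ℂ} (hc : c ^ ℓ = 1) {k : ℕ} (hk : k < ℓ) :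
    c ^ (ℓ - (k + 1) % ℓ) = c ^ (ℓ - 1) * c ^ (ℓ - k) := by
  rw [← pow_add]
  rcases Nat.lt_or_ge (k + 1) ℓ with h | h
  · rw [Nat.mod_eq_of_lt h, show ℓ - 1 + (ℓ - k) = ℓ + (ℓ - (k + 1)) by omega, pow_add, hc,
      one_mul]
  · have hk1 : k + 1 = ℓ := by omega
    rw [show (k + 1) % ℓ = 0 by rw [hk1, Nat.mod_self], show ℓ - 1 + (ℓ - k) = ℓ - 0 by omega]

lemma rank_vecMulVec_le {m k : ℕ} (w : Fin m → ℂ) (v : Fin k → ℂ) :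
    (Matrix.vecMulVec w v).rank ≤ 1 := by
  rw [Matrix.rank]
  have hle : LinearMap.range (Matrix.vecMulVec w v).mulVecLin ≤ Submodule.span ℂ {w} := by
    rintro _ ⟨u, rfl⟩
    have : (Matrix.vecMulVec w v).mulVecLin u = (dotProduct v u) • w := by
      ext i
      simp [Matrix.mulVecLin_apply, Matrix.mulVec, Matrix.vecMulVec_apply, dotProduct,
        Finset.mul_sum, mul_assoc, Finset.sum_mul, mul_comm, mul_left_comm]
    rw [this]
    exact Submodule.smul_mem _ _ (Submodule.mem_span_singleton_self w)
  refine le_trans (Submodule.finrank_mono hle) ?_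
  by_cases hw : w = 0
  · subst hw
    rw [Submodule.span_zero_singleton]
    simp
  · rw [finrank_span_singleton hw]

variable (h1 : 1 ≤ ℓ) (hn : ℓ ≤ n)

/-- From the full proportionality relation, the cyclic shift multiplies by `c^{ℓ-1}`. -/
lemma shift_eq (y : Fin n → ℂ) (c : ℂ) (hc : c ^ ℓ = 1)
    (hy : ∀ j : Fin ℓ, y (Fin.castLE hn j) = c ^ (ℓ - (j : ℕ)) * y (Fin.castLE hn ⟨0, h1⟩)) :
    ∀ k : Fin ℓ, y (Fin.castLE hn ⟨((k : ℕ) + 1) % ℓ, Nat.mod_lt _ h1⟩) =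
      c ^ (ℓ - 1) * y (Fin.castLE hn k) := by
  intro k
  rw [hy ⟨((k : ℕ) + 1) % ℓ, Nat.mod_lt _ h1⟩, hy k]
  show c ^ (ℓ - (((k : ℕ) + 1) % ℓ)) * _ = _
  rw [cpow_step hc k.isLt]
  ring

lemma sum_yx (y : Fin n → ℂ) (x : Fin (n + 1) → ℂ) (c : ℂ)
    (hy : ∀ j : Fin ℓ, y (Fin.castLE hn j) = c ^ (ℓ - (j : ℕ)) * y (Fin.castLE hn ⟨0, h1⟩)) :
    (∑ k : Fin ℓ, y (Fin.castLE hn k) * x (Fin.castLE (hn.trans n.le_succ) k)) =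
      y (Fin.castLE hn ⟨0, h1⟩) * Lpoly n ℓ hn c x := by
  rw [Lpoly, Finset.mul_sum]
  exact Finset.sum_congr rfl fun k _ => by rw [hy k]; ring

lemma Qpoly_eq (y : Fin n → ℂ) (x : Fin (n + 1) → ℂ) (c : ℂ) (hc : c ^ ℓ = 1)
    (hy : ∀ j : Fin ℓ, y (Fin.castLE hn j) = c ^ (ℓ - (j : ℕ)) * y (Fin.castLE hn ⟨0, h1⟩)) :
    Qpoly n ℓ h1 hn y x =
      c ^ (ℓ - 1) * (y (Fin.castLE hn ⟨0, h1⟩) * Lpoly n ℓ hn c x) := by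
  rw [Qpoly, ← sum_yx h1 hn y x c hy, Finset.mul_sum]
  exact Finset.sum_congr rfl fun k _ => by rw [shift_eq h1 hn y c hc hy k]; ring

end AsetAux

open AsetAux in
/-- Description of the rank-drop locus `A` in Example 2.3:
`A = ⋃_{c^ℓ=1} {(y,x) : y_j = c^{ℓ+1−j} y₁ (2 ≤ j ≤ ℓ), x_{n+1} = 0, y₁·L_c(x) = 0}`. -/
theorem Aset_eq_union (n ℓ : ℕ) (h1 : 1 ≤ ℓ) (hn : ℓ ≤ n) :
    Aset n ℓ h1 hn =
      ⋃ c ∈ {c : ℂ | c ^ ℓ = 1},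
        {p : (Fin n → ℂ) × (Fin (n + 1) → ℂ) |
          (∀ j : Fin ℓ, j ≠ ⟨0, h1⟩ →
            p.1 (Fin.castLE hn j) = c ^ (ℓ - (j : ℕ)) * p.1 (Fin.castLE hn ⟨0, h1⟩)) ∧
          p.2 (Fin.last n) = 0 ∧
          p.1 (Fin.castLE hn ⟨0, h1⟩) * Lpoly n ℓ hn c p.2 = 0} := by
  ext ⟨y, x⟩
  simp only [Aset, Xset, Set.mem_setOf_eq, Set.mem_iUnion, exists_prop]
  constructor
  · rintro ⟨⟨hP, hQ⟩, hrank⟩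
    -- First produce `c` with `c^ℓ = 1` and full proportionality.
    obtain ⟨c, hc, hy⟩ : ∃ c : ℂ, c ^ ℓ = 1 ∧ ∀ j : Fin ℓ,
        y (Fin.castLE hn j) = c ^ (ℓ - (j : ℕ)) * y (Fin.castLE hn ⟨0, h1⟩) := by
      by_cases h0 : ∀ k : Fin ℓ, y (Fin.castLE hn k) = 0
      · exact ⟨1, one_pow ℓ, fun j => by rw [h0 j, h0 ⟨0, h1⟩, mul_zero]⟩
      · push_neg at h0
        obtain ⟨m, hm⟩ := h0
        set D := Dmat n ℓ h1 hn y with hD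
        -- rows of `D` lie in the column space of `Dᵀ`, which has dimension ≤ 1
        have hrT : Module.finrank ℂ (LinearMap.range D.transpose.mulVecLin) ≤ 1 := by
          have := D.rank_transpose
          rw [Matrix.rank] at this
          rw [this]; exact hrank
        have hr0 : (fun j => D 0 j) ∈ LinearMap.range D.transpose.mulVecLin :=
          ⟨Pi.single 0 1, by funext j; simp [Matrix.mulVecLin_apply, Matrix.transpose_apply]⟩
        have hr1 : (fun j => D 1 j) ∈ LinearMap.range D.transpose.mulVecLin :=
          ⟨Pi.single 1 1, by funext j; simp [Matrix.mulVecLin_apply, Matrix.transpose_apply]⟩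
        have hr0ne : (fun j => D 0 j) ≠ 0 := by
          intro h
          exact hm (by simpa [hD, Dmat] using congrFun h m)
        have hspan : Submodule.span ℂ {(fun j => D 0 j)} =
            LinearMap.range D.transpose.mulVecLin := by
          apply Submodule.eq_of_le_of_finrank_le
            ((Submodule.span_singleton_le_iff_mem _ _).2 hr0)
          rw [finrank_span_singleton hr0ne]
          exact hrT
        obtain ⟨a, ha⟩ := Submodule.mem_span_singleton.mp (hspan ▸ hr1)
        have h2 : ∀ k : Fin ℓ,
            y (Fin.castLE hn ⟨((k : ℕ) + 1) % ℓ, Nat.mod_lt _ h1⟩) =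
              a * y (Fin.castLE hn k) := by
          intro k
          have := congrFun ha k
          simpa [hD, Dmat] using this.symm
        -- y_k = a^k y_0
        have hpow : ∀ k : Fin ℓ,
            y (Fin.castLE hn k) = a ^ (k : ℕ) * y (Fin.castLE hn ⟨0, h1⟩) := by
          intro ⟨k, hk⟩
          induction k with
          | zero => simp
          | succ k ih =>
            have hk' : k < ℓ := by omega
            have hstep := h2 ⟨k, hk'⟩
            rw [show (⟨(((⟨k, hk'⟩ : Fin ℓ) : ℕ) + 1) % ℓ, Nat.mod_lt _ h1⟩ : Fin ℓ) =
              ⟨k + 1, hk⟩ from Fin.ext (Nat.mod_eq_of_lt hk)] at hstep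
            rw [hstep, ih hk', pow_succ]
            ring
        have hy0ne : y (Fin.castLE hn ⟨0, h1⟩) ≠ 0 := by
          intro h
          exact hm (by rw [hpow m, h, mul_zero])
        have haℓ : a ^ ℓ = 1 := by
          have hstep := h2 ⟨ℓ - 1, by omega⟩
          rw [show (⟨(((⟨ℓ - 1, by omega⟩ : Fin ℓ) : ℕ) + 1) % ℓ, Nat.mod_lt _ h1⟩ : Fin ℓ) =
            ⟨0, h1⟩ from Fin.ext (by show (ℓ - 1 + 1) % ℓ = 0; rw [show ℓ - 1 + 1 = ℓ by omega,
              Nat.mod_self])] at hstep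
          rw [hpow ⟨ℓ - 1, by omega⟩] at hstep
          have key : y (Fin.castLE hn ⟨0, h1⟩) = a ^ ℓ * y (Fin.castLE hn ⟨0, h1⟩) := by
            conv_lhs => rw [hstep]
            rw [show ((⟨ℓ - 1, by omega⟩ : Fin ℓ) : ℕ) = ℓ - 1 from rfl, ← mul_assoc,
              ← pow_succ', show ℓ - 1 + 1 = ℓ by omega]
          apply mul_right_cancel₀ hy0ne
          rw [one_mul, ← key]
        refine ⟨a ^ (ℓ - 1), ?_, ?_⟩
        · rw [← pow_mul, Nat.mul_comm, pow_mul, haℓ, one_pow]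
        · intro j
          rw [hpow j]
          congr 1
          -- (a^{ℓ-1})^{ℓ-j} = a^j
          have h3 : a ^ (ℓ - (j : ℕ)) * a ^ (j : ℕ) = 1 := by
            rw [← pow_add, show ℓ - (j : ℕ) + (j : ℕ) = ℓ by omega, haℓ]
          have h4 : (a ^ (ℓ - 1)) ^ (ℓ - (j : ℕ)) * a ^ (ℓ - (j : ℕ)) = 1 := by
            rw [← mul_pow, ← pow_succ, show ℓ - 1 + 1 = ℓ by omega, haℓ, one_pow]
          calc a ^ (j : ℕ) = ((a ^ (ℓ - 1)) ^ (ℓ - (j : ℕ)) * a ^ (ℓ - (j : ℕ))) * a ^ (j : ℕ) := by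
                rw [h4, one_mul]
            _ = (a ^ (ℓ - 1)) ^ (ℓ - (j : ℕ)) * (a ^ (ℓ - (j : ℕ)) * a ^ (j : ℕ)) := by ring
            _ = (a ^ (ℓ - 1)) ^ (ℓ - (j : ℕ)) := by rw [h3, mul_one]
    -- now conclude from `P = 0`, `Q = 0`
    have hcne : c ≠ 0 := fun h => one_ne_zero (by rw [← hc, h, zero_pow (by omega)])
    have hQ' : c ^ (ℓ - 1) * (y (Fin.castLE hn ⟨0, h1⟩) * Lpoly n ℓ hn c x) = 0 := by
      rw [← Qpoly_eq h1 hn y x c hc hy]; exact hQ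
    have hyL : y (Fin.castLE hn ⟨0, h1⟩) * Lpoly n ℓ hn c x = 0 :=
      (mul_eq_zero.mp hQ').resolve_left (pow_ne_zero _ hcne)
    have hP' : y (Fin.castLE hn ⟨0, h1⟩) * Lpoly n ℓ hn c x + x (Fin.last n) ^ 2 = 0 := by
      rw [← sum_yx h1 hn y x c hy]; exact hP
    have hxl : x (Fin.last n) = 0 := by
      have : x (Fin.last n) ^ 2 = 0 := by rw [hyL, zero_add] at hP'; exact hP'
      exact pow_eq_zero_iff (by norm_num) |>.mp this
    exact ⟨c, hc, fun j _ => hy j, hxl, hyL⟩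
  · rintro ⟨c, hc, hyj, hxl, hyL⟩
    have hcne : c ≠ 0 := fun h => one_ne_zero (by rw [← hc, h, zero_pow (by omega)])
    have hy : ∀ j : Fin ℓ,
        y (Fin.castLE hn j) = c ^ (ℓ - (j : ℕ)) * y (Fin.castLE hn ⟨0, h1⟩) := by
      intro j
      by_cases hj : j = ⟨0, h1⟩
      · subst hj
        show _ = c ^ (ℓ - 0) * _
        rw [Nat.sub_zero, hc, one_mul]
      · exact hyj j hj
    refine ⟨⟨?_, ?_⟩, ?_⟩
    · rw [Ppoly, sum_yx h1 hn y x c hy, hyL, hxl]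
      ring
    · rw [Qpoly_eq h1 hn y x c hc hy, hyL, mul_zero]
    · have hD : Dmat n ℓ h1 hn y =
          Matrix.vecMulVec ![1, c ^ (ℓ - 1)] (fun k => y (Fin.castLE hn k)) := by
        ext i j
        fin_cases i
        · simp [Dmat, Matrix.vecMulVec_apply]
        · simpa [Dmat, Matrix.vecMulVec_apply] using shift_eq h1 hn y c hc hy j
      rw [hD]
      exact rank_vecMulVec_le _ _
end
end

section
/- With notation as in the context, let S = {(y,x) ∈ ℂⁿ × ℂ^{n+1} : y₁ = ⋯ = y_ℓ = 0 and x_{n+1} = 0}, and for each c ∈ ℂ with c^ℓ = 1 let T_c = {(y,x) ∈ ℂⁿ × ℂ^{n+1} : y_j = c^{ℓ+1−j}·y₁ for all 2 ≤ j ≤ ℓ, x_{n+1} = 0, and L_c(x) = 0}. Then A = S ∪ ⋃_{c^ℓ=1} T_c, and S as well as each T_c is a ℂ-linear subspace of ℂ^{2n+1} of dimension 2n − ℓ. In particular, A is a finite union of linear subspaces each of dimension 2n − ℓ. -/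
noncomputable section

/-- `S = {(y,x) : y₁ = ⋯ = y_ℓ = 0, x_{n+1} = 0}`. -/
def Sset (n ℓ : ℕ) (hn : ℓ ≤ n) : Set ((Fin n → ℂ) × (Fin (n + 1) → ℂ)) :=
  {p | (∀ k : Fin ℓ, p.1 (Fin.castLE hn k) = 0) ∧ p.2 (Fin.last n) = 0}

/-- `T_c = {(y,x) : y_j = c^{ℓ+1−j} y₁ (2 ≤ j ≤ ℓ), x_{n+1} = 0, L_c(x) = 0}`. -/
def Tset (n ℓ : ℕ) (h1 : 1 ≤ ℓ) (hn : ℓ ≤ n) (c : ℂ) :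
    Set ((Fin n → ℂ) × (Fin (n + 1) → ℂ)) :=
  {p | (∀ j : Fin ℓ, j ≠ ⟨0, h1⟩ →
      p.1 (Fin.castLE hn j) = c ^ (ℓ - (j : ℕ)) * p.1 (Fin.castLE hn ⟨0, h1⟩)) ∧
    p.2 (Fin.last n) = 0 ∧ Lpoly n ℓ hn c p.2 = 0}

/-!
The rank condition says that the cyclic shift of `Y = (y₁,…,y_ℓ)` is a multiple `μ • Y`.
If `Y ≠ 0` this forces `μ ^ ℓ = 1` and `Y = y₁ (1, μ, …, μ^{ℓ-1})`, i.e. `y_j = c^{ℓ+1-j} y₁`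
with `c = μ⁻¹`. For such `y` one has `P = y₁ L_c(x) + x_{n+1}²` and `Q = c^{ℓ-1} y₁ L_c(x)`, so a
point of `A` has `x_{n+1} = 0` and either `y₁ = 0` (then `Y = 0`: the point lies in `S`) or
`L_c(x) = 0` (it lies in `T_c`). Both `S` and `T_c` are kernels of surjective linear maps onto
`ℂ^ℓ × ℂ`, hence have dimension `(2n + 1) - (ℓ + 1)`.
-/

open Module Submodule

namespace Matrix

theorem rank_le_one_of_row_one_eq_smul {R ι : Type*} [CommRing R] [StrongRankCondition R]
    [Fintype ι] (M : Matrix (Fin 2) ι R) {μ : R} (h : M 1 = μ • M 0) : M.rank ≤ 1 := by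
  have hM : M = vecMulVec ![1, μ] (M 0) := by
    ext i j
    fin_cases i <;> simp [vecMulVec_apply, h]
  exact hM ▸ rank_vecMulVec_le _ _

theorem exists_row_one_eq_smul_of_rank_le_one {K ι : Type*} [Field K] [Fintype ι]
    (M : Matrix (Fin 2) ι K) (h : M.rank ≤ 1) (h0 : M 0 ≠ 0) : ∃ μ : K, M 1 = μ • M 0 := by
  rw [rank_eq_finrank_span_row] at h
  have hspan : K ∙ M 0 = span K (Set.range M.row) :=
    eq_of_le_of_finrank_le (span_mono (Set.singleton_subset_iff.2 ⟨0, rfl⟩))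
      (by rwa [finrank_span_singleton h0])
  have hM1 : M 1 ∈ K ∙ M 0 := hspan ▸ subset_span ⟨1, rfl⟩
  obtain ⟨μ, hμ⟩ := mem_span_singleton.1 hM1
  exact ⟨μ, hμ.symm⟩

end Matrix

section CyclicRecurrence

variable {M : Type*} {ℓ : ℕ} (h1 : 1 ≤ ℓ)

def IsGeometricWith [Monoid M] (c : M) (Y : Fin ℓ → M) : Prop :=
  ∀ j : Fin ℓ, Y j = c ^ (ℓ - (j : ℕ)) * Y ⟨0, h1⟩

theorem eq_pow_mul_of_cyclic [Monoid M] {Y : Fin ℓ → M} {μ : M}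
    (hrec : ∀ k : Fin ℓ, Y ⟨(k + 1) % ℓ, Nat.mod_lt _ h1⟩ = μ * Y k) (j : Fin ℓ) :
    Y j = μ ^ (j : ℕ) * Y ⟨0, h1⟩ := by
  obtain ⟨j, hj⟩ := j
  induction j with
  | zero => simp
  | succ m ih =>
    have h := hrec ⟨m, by omega⟩
    simp only [Nat.mod_eq_of_lt hj] at h
    rw [h, ih, pow_succ', mul_assoc]

theorem pow_eq_one_of_cyclic [MonoidWithZero M] [IsRightCancelMulZero M] {Y : Fin ℓ → M} {μ : M}
    (hrec : ∀ k : Fin ℓ, Y ⟨(k + 1) % ℓ, Nat.mod_lt _ h1⟩ = μ * Y k) (hY : Y ≠ 0) :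
    μ ^ ℓ = 1 := by
  obtain ⟨i, hi⟩ := Function.ne_iff.1 hY
  have hY0 : Y ⟨0, h1⟩ ≠ 0 := right_ne_zero_of_mul (eq_pow_mul_of_cyclic h1 hrec i ▸ hi)
  have hwrap := hrec ⟨ℓ - 1, by omega⟩
  simp only [Nat.sub_add_cancel h1, Nat.mod_self] at hwrap
  rw [eq_pow_mul_of_cyclic h1 hrec ⟨ℓ - 1, by omega⟩, ← mul_assoc, ← pow_succ'] at hwrap
  simp only [Nat.sub_add_cancel h1] at hwrap
  exact (mul_right_cancel₀ hY0 (one_mul _ |>.trans hwrap)).symm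

theorem pow_sub_eq_pow_of_mul_eq_one [CommMonoid M] {c μ : M} (hcμ : c * μ = 1)
    (hμ : μ ^ ℓ = 1) {j : ℕ} (hj : j ≤ ℓ) : c ^ (ℓ - j) = μ ^ j :=
  calc c ^ (ℓ - j) = c ^ (ℓ - j) * μ ^ ℓ := by rw [hμ, mul_one]
    _ = (c * μ) ^ (ℓ - j) * μ ^ j := by rw [mul_pow, mul_assoc, ← pow_add, Nat.sub_add_cancel hj]
    _ = μ ^ j := by rw [hcμ, one_pow, one_mul]

theorem exists_isGeometricWith_of_cyclic {K : Type*} [Field K] {Y : Fin ℓ → K} {μ : K}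
    (hrec : ∀ k : Fin ℓ, Y ⟨(k + 1) % ℓ, Nat.mod_lt _ h1⟩ = μ * Y k) (hY : Y ≠ 0) :
    ∃ c : K, c ^ ℓ = 1 ∧ IsGeometricWith h1 c Y := by
  have hμ := pow_eq_one_of_cyclic h1 hrec hY
  have hμ0 : μ ≠ 0 := (IsUnit.of_pow_eq_one hμ (by omega)).ne_zero
  refine ⟨μ⁻¹, by rw [inv_pow, hμ, inv_one], fun j => ?_⟩
  rw [eq_pow_mul_of_cyclic h1 hrec j,
    pow_sub_eq_pow_of_mul_eq_one (inv_mul_cancel₀ hμ0) hμ j.is_lt.le]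

theorem IsGeometricWith.cyclic_recurrence [CommMonoid M] {c : M} {Y : Fin ℓ → M}
    (hY : IsGeometricWith h1 c Y) (hc : c ^ ℓ = 1) (k : Fin ℓ) :
    Y ⟨(k + 1) % ℓ, Nat.mod_lt _ h1⟩ = c ^ (ℓ - 1) * Y k := by
  rw [hY, hY k, ← mul_assoc, ← pow_add]
  congr 1
  dsimp only
  rcases Nat.lt_or_ge ((k : ℕ) + 1) ℓ with hlt | hge
  · rw [Nat.mod_eq_of_lt hlt, show ℓ - 1 + (ℓ - k) = ℓ - (k + 1) + ℓ by omega, pow_add, hc,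
      mul_one]
  · rw [show (k : ℕ) + 1 = ℓ by omega, Nat.mod_self, Nat.sub_zero,
      show ℓ - 1 + (ℓ - k) = ℓ by omega]

theorem isGeometricWith_iff_of_pow_eq_one [Monoid M] {c : M} (hc : c ^ ℓ = 1)
    (Y : Fin ℓ → M) : IsGeometricWith h1 c Y ↔
      ∀ j : Fin ℓ, j ≠ ⟨0, h1⟩ → Y j = c ^ (ℓ - (j : ℕ)) * Y ⟨0, h1⟩ := by
  refine ⟨fun hY j _ => hY j, fun hY j => ?_⟩
  by_cases hj : j = ⟨0, h1⟩
  · simp [hj, hc]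
  · exact hY j hj

end CyclicRecurrence

section Example23

variable {n ℓ : ℕ} (h1 : 1 ≤ ℓ) (hn : ℓ ≤ n)

theorem sum_mul_eq_mul_Lpoly {c : ℂ} {y : Fin n → ℂ} (hy : IsGeometricWith h1 c (y ∘ Fin.castLE hn))
    (x : Fin (n + 1) → ℂ) :
    ∑ k : Fin ℓ, y (Fin.castLE hn k) * x (Fin.castLE (hn.trans n.le_succ) k) =
      y (Fin.castLE hn ⟨0, h1⟩) * Lpoly n ℓ hn c x := by
  rw [Lpoly, Finset.mul_sum]
  refine Finset.sum_congr rfl fun k _ => ?_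
  rw [show y (Fin.castLE hn k) = _ from hy k, Function.comp_apply]
  ring

theorem Ppoly_eq_of_isGeometricWith {c : ℂ} {y : Fin n → ℂ}
    (hy : IsGeometricWith h1 c (y ∘ Fin.castLE hn)) (x : Fin (n + 1) → ℂ) :
    Ppoly n ℓ hn y x = y (Fin.castLE hn ⟨0, h1⟩) * Lpoly n ℓ hn c x + x (Fin.last n) ^ 2 := by
  rw [Ppoly, sum_mul_eq_mul_Lpoly h1 hn hy]

theorem Qpoly_eq_of_isGeometricWith {c : ℂ} (hc : c ^ ℓ = 1) {y : Fin n → ℂ}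
    (hy : IsGeometricWith h1 c (y ∘ Fin.castLE hn)) (x : Fin (n + 1) → ℂ) :
    Qpoly n ℓ h1 hn y x = c ^ (ℓ - 1) * (y (Fin.castLE hn ⟨0, h1⟩) * Lpoly n ℓ hn c x) := by
  rw [Qpoly, ← sum_mul_eq_mul_Lpoly h1 hn hy, Finset.mul_sum]
  refine Finset.sum_congr rfl fun k _ => ?_
  rw [show y (Fin.castLE hn _) = _ from hy.cyclic_recurrence h1 hc k, Function.comp_apply]
  ring

theorem rank_Dmat_le_one_iff (y : Fin n → ℂ) :
    (Dmat n ℓ h1 hn y).rank ≤ 1 ↔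
      ∃ c : ℂ, c ^ ℓ = 1 ∧ IsGeometricWith h1 c (y ∘ Fin.castLE hn) := by
  constructor
  · intro h
    by_cases hY : y ∘ Fin.castLE hn = 0
    · exact ⟨1, one_pow ℓ, fun j => by rw [hY, Pi.zero_apply, Pi.zero_apply, mul_zero]⟩
    · obtain ⟨μ, hμ⟩ := Matrix.exists_row_one_eq_smul_of_rank_le_one _ h hY
      exact exists_isGeometricWith_of_cyclic h1 (fun k => congrFun hμ k) hY
  · rintro ⟨c, hc, hy⟩
    exact Matrix.rank_le_one_of_row_one_eq_smul _ (funext (hy.cyclic_recurrence h1 hc))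

theorem mem_Aset_iff (p : (Fin n → ℂ) × (Fin (n + 1) → ℂ)) :
    p ∈ Aset n ℓ h1 hn ↔ ∃ c : ℂ, c ^ ℓ = 1 ∧ IsGeometricWith h1 c (p.1 ∘ Fin.castLE hn) ∧
      p.1 (Fin.castLE hn ⟨0, h1⟩) * Lpoly n ℓ hn c p.2 = 0 ∧ p.2 (Fin.last n) = 0 := by
  simp only [Aset, Xset, Set.mem_ofPred_eq, rank_Dmat_le_one_iff]
  constructor
  · rintro ⟨⟨hP, hQ⟩, c, hc, hy⟩
    rw [Ppoly_eq_of_isGeometricWith h1 hn hy] at hP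
    rw [Qpoly_eq_of_isGeometricWith h1 hn hc hy] at hQ
    have hc0 : c ^ (ℓ - 1) ≠ 0 := ((IsUnit.of_pow_eq_one hc (by omega)).pow _).ne_zero
    have hL := (mul_eq_zero.1 hQ).resolve_left hc0
    rw [hL, zero_add] at hP
    exact ⟨c, hc, hy, hL, pow_eq_zero_iff two_ne_zero |>.1 hP⟩
  · rintro ⟨c, hc, hy, hL, hx⟩
    refine ⟨⟨?_, ?_⟩, c, hc, hy⟩
    · rw [Ppoly_eq_of_isGeometricWith h1 hn hy, hL, hx]; ring
    · rw [Qpoly_eq_of_isGeometricWith h1 hn hc hy, hL, mul_zero]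

theorem mem_Tset_iff {c : ℂ} (hc : c ^ ℓ = 1) (p : (Fin n → ℂ) × (Fin (n + 1) → ℂ)) :
    p ∈ Tset n ℓ h1 hn c ↔ IsGeometricWith h1 c (p.1 ∘ Fin.castLE hn) ∧
      p.2 (Fin.last n) = 0 ∧ Lpoly n ℓ hn c p.2 = 0 := by
  rw [isGeometricWith_iff_of_pow_eq_one h1 hc]
  rfl

theorem Aset_eq_Sset_union_Tset :
    Aset n ℓ h1 hn = Sset n ℓ hn ∪ ⋃ c ∈ {c : ℂ | c ^ ℓ = 1}, Tset n ℓ h1 hn c := by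
  ext p
  simp only [mem_Aset_iff, Set.mem_union, Set.mem_iUnion, Set.mem_ofPred_eq, exists_prop]
  constructor
  · rintro ⟨c, hc, hy, hL, hx⟩
    rcases mul_eq_zero.1 hL with hy0 | hL
    · exact Or.inl ⟨fun k => (hy k).trans (by rw [Function.comp_apply, hy0, mul_zero]), hx⟩
    · exact Or.inr ⟨c, hc, (mem_Tset_iff h1 hn hc p).2 ⟨hy, hx, hL⟩⟩
  · rintro (⟨hy, hx⟩ | ⟨c, hc, hT⟩)
    · exact ⟨1, one_pow ℓ, fun j => by simp only [Function.comp_apply, hy, mul_zero],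
        by rw [hy, zero_mul], hx⟩
    · obtain ⟨hy, hx, hL⟩ := (mem_Tset_iff h1 hn hc p).1 hT
      exact ⟨c, hc, hy, by rw [hL, mul_zero], hx⟩

theorem finrank_ker_eq_of_surjective
    {f : ((Fin n → ℂ) × (Fin (n + 1) → ℂ)) →ₗ[ℂ] (Fin ℓ → ℂ) × ℂ} (hf : Function.Surjective f) :
    finrank ℂ (LinearMap.ker f) = 2 * n - ℓ := by
  have h := f.finrank_range_add_finrank_ker
  rw [LinearMap.range_eq_top.2 hf, finrank_top] at h
  simp only [finrank_prod, finrank_fin_fun, finrank_self] at h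
  omega

def sEquations : ((Fin n → ℂ) × (Fin (n + 1) → ℂ)) →ₗ[ℂ] (Fin ℓ → ℂ) × ℂ :=
  (LinearMap.funLeft ℂ ℂ (Fin.castLE hn)).prodMap (LinearMap.proj (R := ℂ) (Fin.last n))

theorem coe_ker_sEquations : (LinearMap.ker (sEquations hn) : Set _) = Sset n ℓ hn := by
  ext p
  simp [sEquations, Sset, funext_iff]

theorem sEquations_surjective : Function.Surjective (sEquations hn) :=
  (LinearMap.funLeft_surjective_of_injective ℂ ℂ _ (Fin.castLE_injective hn)).prodMap
    (LinearMap.proj_surjective (R := ℂ) (φ := fun _ => ℂ) _)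

-- The relation defining `T_c` is vacuous at `j = 0`; that slot carries the equation `L_c(x) = 0`.
def tEquations (c : ℂ) : ((Fin n → ℂ) × (Fin (n + 1) → ℂ)) →ₗ[ℂ] (Fin ℓ → ℂ) × ℂ where
  toFun p := (fun j => if j = ⟨0, h1⟩ then Lpoly n ℓ hn c p.2
      else p.1 (Fin.castLE hn j) - c ^ (ℓ - (j : ℕ)) * p.1 (Fin.castLE hn ⟨0, h1⟩),
    p.2 (Fin.last n))
  map_add' p q := by
    refine Prod.ext (funext fun j => ?_) rfl
    by_cases hj : j = ⟨0, h1⟩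
    · simp [hj, Lpoly, mul_add, Finset.sum_add_distrib]
    · simp only [hj, ↓reduceIte, Prod.fst_add, Pi.add_apply, Prod.mk_add_mk]
      ring
  map_smul' a p := by
    refine Prod.ext (funext fun j => ?_) rfl
    by_cases hj : j = ⟨0, h1⟩
    · simp [hj, Lpoly, Finset.mul_sum, mul_left_comm]
    · simp only [hj, ↓reduceIte, Prod.smul_fst, Pi.smul_apply, smul_eq_mul, RingHom.id_apply,
        Prod.smul_mk]
      ring

theorem coe_ker_tEquations (c : ℂ) :
    (LinearMap.ker (tEquations h1 hn c) : Set _) = Tset n ℓ h1 hn c := by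
  ext p
  simp only [SetLike.mem_coe, LinearMap.mem_ker, tEquations, LinearMap.coe_mk, AddHom.coe_mk,
    Prod.ext_iff, funext_iff, Prod.fst_zero, Prod.snd_zero, Pi.zero_apply, Tset,
    Set.mem_ofPred_eq]
  constructor
  · rintro ⟨h, hx⟩
    exact ⟨fun j hj => sub_eq_zero.1 (by simpa [hj] using h j), hx, by simpa using h ⟨0, h1⟩⟩
  · rintro ⟨hy, hx, hL⟩
    refine ⟨fun j => ?_, hx⟩
    split_ifs with hj
    exacts [hL, sub_eq_zero.2 (hy j hj)]

theorem tEquations_surjective {c : ℂ} (hc : c ^ ℓ = 1) :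
    Function.Surjective (tEquations h1 hn c) := by
  rintro ⟨v, t⟩
  refine ⟨(Function.extend (Fin.castLE hn) (Function.update v ⟨0, h1⟩ 0) 0,
    Pi.single (Fin.castLE (hn.trans n.le_succ) ⟨0, h1⟩) (v ⟨0, h1⟩) + Pi.single (Fin.last n) t),
    ?_⟩
  have hlast (k : Fin ℓ) : Fin.castLE (hn.trans n.le_succ) k ≠ Fin.last n :=
    Fin.ne_of_val_ne (by rw [Fin.val_castLE, Fin.val_last]; omega)
  ext j
  · by_cases hj : j = ⟨0, h1⟩
    · subst hj
      simp only [tEquations, LinearMap.coe_mk, AddHom.coe_mk, if_pos, Lpoly, Pi.add_apply,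
        Pi.single_apply, (Fin.castLE_injective _).eq_iff, hlast, if_false, add_zero, mul_ite,
        mul_zero, Finset.sum_ite_eq', Finset.mem_univ, Nat.sub_zero, hc, one_mul]
    · simp only [tEquations, LinearMap.coe_mk, AddHom.coe_mk, if_neg hj,
        (Fin.castLE_injective hn).extend_apply, Function.update_of_ne hj, Function.update_self]
      ring
  · have hlast_ne_zero : Fin.last n ≠ 0 :=
      Fin.ne_of_val_ne (by rw [Fin.val_last, Fin.val_zero]; omega)
    simp [tEquations, hlast_ne_zero]

end Example23

/-- In Example 2.3, `A = S ∪ ⋃_{c^ℓ=1} T_c`, where `S` and each `T_c` are `ℂ`-linear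
subspaces of `ℂ^{2n+1}` of dimension `2n − ℓ`; in particular `A` is a finite union of
linear subspaces, each of dimension `2n − ℓ`. -/
theorem Aset_union_of_linear_subspaces (n ℓ : ℕ) (h1 : 1 ≤ ℓ) (hn : ℓ ≤ n) :
    (Aset n ℓ h1 hn =
      Sset n ℓ hn ∪ ⋃ c ∈ {c : ℂ | c ^ ℓ = 1}, Tset n ℓ h1 hn c) ∧
    (∃ S' : Submodule ℂ ((Fin n → ℂ) × (Fin (n + 1) → ℂ)),
      (S' : Set ((Fin n → ℂ) × (Fin (n + 1) → ℂ))) = Sset n ℓ hn ∧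
      Module.finrank ℂ S' = 2 * n - ℓ) ∧
    (∀ c : ℂ, c ^ ℓ = 1 →
      ∃ T' : Submodule ℂ ((Fin n → ℂ) × (Fin (n + 1) → ℂ)),
        (T' : Set ((Fin n → ℂ) × (Fin (n + 1) → ℂ))) = Tset n ℓ h1 hn c ∧
        Module.finrank ℂ T' = 2 * n - ℓ) ∧
    (∃ 𝒲 : Finset (Submodule ℂ ((Fin n → ℂ) × (Fin (n + 1) → ℂ))),
      (Aset n ℓ h1 hn = ⋃ W ∈ 𝒲, (W : Set ((Fin n → ℂ) × (Fin (n + 1) → ℂ)))) ∧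
      ∀ W ∈ 𝒲, Module.finrank ℂ W = 2 * n - ℓ) := by
  classical
  have hS := coe_ker_sEquations hn
  have hSdim := finrank_ker_eq_of_surjective (sEquations_surjective hn)
  have hT := coe_ker_tEquations h1 hn
  have hTdim (c : ℂ) (hc : c ^ ℓ = 1) :=
    finrank_ker_eq_of_surjective (tEquations_surjective h1 hn hc)
  have hroots : {c : ℂ | c ^ ℓ = 1} = Polynomial.nthRootsFinset ℓ (1 : ℂ) := by
    ext c
    simp [Polynomial.mem_nthRootsFinset h1]
  refine ⟨Aset_eq_Sset_union_Tset h1 hn, ⟨_, hS, hSdim⟩, fun c hc => ⟨_, hT c, hTdim c hc⟩,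
    insert (LinearMap.ker (sEquations hn))
      ((Polynomial.nthRootsFinset ℓ (1 : ℂ)).image fun c => LinearMap.ker (tEquations h1 hn c)),
    ?_, ?_⟩
  · rw [Aset_eq_Sset_union_Tset h1 hn, Finset.set_biUnion_insert,
      Finset.set_biUnion_finset_image, hS, hroots]
    simp only [hT, Finset.mem_coe]
  · simp only [Finset.forall_mem_insert, Finset.forall_mem_image, hSdim, true_and]
    exact fun c hc => hTdim c ((Polynomial.mem_nthRootsFinset h1 1).1 hc)
end
end

section
/- With notation as in the context, let η ∈ ℂⁿ satisfy rank D_η ≤ 1, and let c ∈ ℂ with c^ℓ = 1 be such that η_j = c^{ℓ+1−j}·η₁ for all 2 ≤ j ≤ ℓ. Then: (i) if η₁ ≠ 0, the fibre f⁻¹(η) equals {η} × {x ∈ ℂ^{n+1} : x_{n+1} = 0 and L_c(x) = 0}; (ii) if η₁ = 0 (so that η₁ = ⋯ = η_ℓ = 0), the fibre f⁻¹(η) equals {η} × {x ∈ ℂ^{n+1} : x_{n+1} = 0}. -/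
noncomputable section

/-- Fibres of the projection `f : X → ℂⁿ` of Example 2.3 over points `η` where `D_η` has
rank at most `1`, with `c` a root of `c^ℓ = 1` realizing the rank drop:
(i) if `η₁ ≠ 0`, then `f⁻¹(η) = {η} × {x : x_{n+1} = 0, L_c(x) = 0}`;
(ii) if `η₁ = 0` (so that `η₁ = ⋯ = η_ℓ = 0`), then `f⁻¹(η) = {η} × {x : x_{n+1} = 0}`. -/
theorem fibres_over_rank_drop_locus (n ℓ : ℕ) (h1 : 1 ≤ ℓ) (hn : ℓ ≤ n)
    (η : Fin n → ℂ) (c : ℂ) (hrank : (Dmat n ℓ h1 hn η).rank ≤ 1) (hc : c ^ ℓ = 1)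
    (hrel : ∀ j : Fin ℓ, j ≠ ⟨0, h1⟩ →
      η (Fin.castLE hn j) = c ^ (ℓ - (j : ℕ)) * η (Fin.castLE hn ⟨0, h1⟩)) :
    (η (Fin.castLE hn ⟨0, h1⟩) ≠ 0 →
      {p ∈ Xset n ℓ h1 hn | p.1 = η} =
        ({η} : Set (Fin n → ℂ)) ×ˢ
          {x : Fin (n + 1) → ℂ | x (Fin.last n) = 0 ∧ Lpoly n ℓ hn c x = 0}) ∧
    (η (Fin.castLE hn ⟨0, h1⟩) = 0 →
      (∀ k : Fin ℓ, η (Fin.castLE hn k) = 0) ∧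
      {p ∈ Xset n ℓ h1 hn | p.1 = η} =
        ({η} : Set (Fin n → ℂ)) ×ˢ {x : Fin (n + 1) → ℂ | x (Fin.last n) = 0}) := by
  have hc0 : c ≠ 0 := by
    intro h
    rw [h, zero_pow (by omega : ℓ ≠ 0)] at hc
    exact zero_ne_one hc
  have hη : ∀ k : Fin ℓ,
      η (Fin.castLE hn k) = c ^ (ℓ - (k : ℕ)) * η (Fin.castLE hn ⟨0, h1⟩) := by
    intro k
    by_cases hk : k = ⟨0, h1⟩
    · subst hk; simp [hc]
    · exact hrel k hk
  have hP : ∀ x : Fin (n + 1) → ℂ,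
      Ppoly n ℓ hn η x =
        η (Fin.castLE hn ⟨0, h1⟩) * Lpoly n ℓ hn c x + x (Fin.last n) ^ 2 := by
    intro x
    unfold Ppoly Lpoly
    rw [Finset.mul_sum]
    congr 1
    refine Finset.sum_congr rfl fun k _ => ?_
    rw [hη k]; ring
  have hpow : ∀ k : Fin ℓ,
      c ^ (ℓ - (((k : ℕ) + 1) % ℓ)) = c ^ (ℓ - 1) * c ^ (ℓ - (k : ℕ)) := by
    intro k
    have hklt := k.isLt
    by_cases hk : (k : ℕ) + 1 = ℓ
    · rw [hk, Nat.mod_self, Nat.sub_zero, ← pow_add]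
      have he : ℓ - 1 + (ℓ - (k : ℕ)) = ℓ := by omega
      rw [he]
    · have hlt : (k : ℕ) + 1 < ℓ := by omega
      rw [Nat.mod_eq_of_lt hlt, ← pow_add]
      have he : ℓ - 1 + (ℓ - (k : ℕ)) = ℓ + (ℓ - ((k : ℕ) + 1)) := by omega
      rw [he, pow_add, hc, one_mul]
  have hQ : ∀ x : Fin (n + 1) → ℂ,
      Qpoly n ℓ h1 hn η x =
        c ^ (ℓ - 1) * (η (Fin.castLE hn ⟨0, h1⟩) * Lpoly n ℓ hn c x) := by
    intro x
    unfold Qpoly Lpoly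
    rw [Finset.mul_sum, Finset.mul_sum]
    refine Finset.sum_congr rfl fun k _ => ?_
    rw [hη ⟨((k : ℕ) + 1) % ℓ, Nat.mod_lt _ h1⟩]
    show c ^ (ℓ - (((k : ℕ) + 1) % ℓ)) * _ * _ = _
    rw [hpow k]; ring
  constructor
  · intro hne
    ext ⟨y, x⟩
    simp only [Set.mem_setOf_eq, Set.mem_prod, Set.mem_singleton_iff, Xset]
    constructor
    · rintro ⟨⟨hPz, hQz⟩, rfl⟩
      rw [hQ] at hQz
      have hL : Lpoly n ℓ hn c x = 0 := by
        rcases mul_eq_zero.mp hQz with h | h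
        · exact absurd h (pow_ne_zero _ hc0)
        · rcases mul_eq_zero.mp h with h | h
          · exact absurd h hne
          · exact h
      rw [hP, hL, mul_zero, zero_add] at hPz
      exact ⟨rfl, sq_eq_zero_iff.mp hPz, hL⟩
    · rintro ⟨rfl, hxl, hLz⟩
      refine ⟨⟨?_, ?_⟩, rfl⟩
      · rw [hP, hLz, hxl]; ring
      · rw [hQ, hLz]; ring
  · intro h0
    have hall : ∀ k : Fin ℓ, η (Fin.castLE hn k) = 0 := fun k => by
      rw [hη k, h0, mul_zero]
    refine ⟨hall, ?_⟩
    ext ⟨y, x⟩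
    simp only [Set.mem_setOf_eq, Set.mem_prod, Set.mem_singleton_iff, Xset]
    constructor
    · rintro ⟨⟨hPz, _⟩, rfl⟩
      rw [hP, h0, zero_mul, zero_add] at hPz
      exact ⟨rfl, sq_eq_zero_iff.mp hPz⟩
    · rintro ⟨rfl, hxl⟩
      refine ⟨⟨?_, ?_⟩, rfl⟩
      · rw [hP, h0, hxl]; ring
      · rw [hQ, h0]; ring
end
end

section
/- With notation as in the context, assume ℓ ≥ 2 and let η ∈ ℂⁿ satisfy rank D_η = 2. Let σ be the cyclic permutation of {1,…,ℓ} with σ(k) = k+1 for k < ℓ and σ(ℓ) = 1. Then there exist indices 1 ≤ i < j ≤ ℓ with η_i·η_{σ(j)} − η_j·η_{σ(i)} ≠ 0, and for every such pair (i,j) the map sending x ∈ F_η = {x ∈ ℂ^{n+1} : P(η,x) = 0 and Q(η,x) = 0} to the tuple of its n−1 coordinates other than x_i and x_j is a bijection from F_η onto ℂ^{n−1}. -/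
/-!
Once the coordinates other than `x_i, x_j` are fixed, `P(η, x)` and `Q(η, x)` are affine in
`(x_i, x_j)` with coefficient matrix the minor of `D_η` on the columns `i, j` (the square
`x_{n+1}²` does not involve them since `i, j ≤ ℓ ≤ n`). When that minor is nonzero, the two
equations determine `x_i, x_j` uniquely by Cramer's rule. A nonzero minor exists because the two
rows of `D_η` are linearly independent: were all minors zero, the second row would be a multiple
of the first.
-/

noncomputable section

section AffineInPair

variable {R ι : Type*} [CommRing R]

def AffineInPair (F : (ι → R) → R) (i j : ι) (a b : R) : Prop :=
  ∀ x x' : ι → R, (∀ k, k ≠ i → k ≠ j → x k = x' k) →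
    F x - F x' = a * (x i - x' i) + b * (x j - x' j)

theorem AffineInPair.sum_mul_comp {κ : Type*} [Fintype κ] {e : κ → ι} (he : e.Injective)
    (c : κ → R) {i j : κ} (hij : i ≠ j) :
    AffineInPair (fun x => ∑ k, c k * x (e k)) (e i) (e j) (c i) (c j) := by
  intro x x' h
  simp only [← Finset.sum_sub_distrib, ← mul_sub]
  exact Fintype.sum_eq_add i j hij fun k hk => by
    rw [h _ (he.ne hk.1) (he.ne hk.2), sub_self, mul_zero]

theorem AffineInPair.add_comp_apply {F : (ι → R) → R} {i j m : ι} {a b : R}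
    (hF : AffineInPair F i j a b) (g : R → R) (hi : m ≠ i) (hj : m ≠ j) :
    AffineInPair (fun x => F x + g (x m)) i j a b := by
  intro x x' h
  show F x + g (x m) - (F x' + g (x' m)) = _
  rw [h m hi hj, add_sub_add_right_eq_sub]
  exact hF x x' h

end AffineInPair

section LinearSystem

variable {K : Type*} [Field K] {a b a' b' : K}

theorem eq_zero_and_eq_zero_of_det_ne_zero (hd : a * b' - b * a' ≠ 0) {u v : K}
    (h : a * u + b * v = 0) (h' : a' * u + b' * v = 0) : u = 0 ∧ v = 0 :=
  ⟨mul_left_cancel₀ hd (by linear_combination b' * h - b * h'),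
    mul_left_cancel₀ hd (by linear_combination a * h' - a' * h)⟩

theorem exists_solution_of_det_ne_zero (hd : a * b' - b * a' ≠ 0) (c c' : K) :
    ∃ u v : K, a * u + b * v = c ∧ a' * u + b' * v = c' :=
  ⟨(b' * c - b * c') / (a * b' - b * a'), (a * c' - a' * c) / (a * b' - b * a'),
    by rw [mul_div_assoc', mul_div_assoc', ← add_div, div_eq_iff hd]; ring,
    by rw [mul_div_assoc', mul_div_assoc', ← add_div, div_eq_iff hd]; ring⟩

end LinearSystem

section Fibre

variable {K ι : Type*} [Field K] {F G : (ι → K) → K} {i j : ι} {a b a' b' : K}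

theorem AffineInPair.injective_restrict (hd : a * b' - b * a' ≠ 0)
    (hF : AffineInPair F i j a b) (hG : AffineInPair G i j a' b') :
    Function.Injective
      (fun (x : {x // F x = 0 ∧ G x = 0}) (k : {k // k ≠ i ∧ k ≠ j}) => x.1 k.1) := by
  rintro ⟨x, hxF, hxG⟩ ⟨x', hx'F, hx'G⟩ hxx'
  have hoff : ∀ k, k ≠ i → k ≠ j → x k = x' k := fun k hi hj => congrFun hxx' ⟨k, hi, hj⟩
  obtain ⟨hxi, hxj⟩ := eq_zero_and_eq_zero_of_det_ne_zero hd
    (by rw [← hF x x' hoff, hxF, hx'F, sub_zero]) (by rw [← hG x x' hoff, hxG, hx'G, sub_zero])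
  refine Subtype.ext (funext fun k => ?_)
  by_cases hki : k = i
  · exact hki ▸ sub_eq_zero.mp hxi
  by_cases hkj : k = j
  · exact hkj ▸ sub_eq_zero.mp hxj
  exact hoff k hki hkj

theorem AffineInPair.surjective_restrict (hij : i ≠ j) (hd : a * b' - b * a' ≠ 0)
    (hF : AffineInPair F i j a b) (hG : AffineInPair G i j a' b') :
    Function.Surjective
      (fun (x : {x // F x = 0 ∧ G x = 0}) (k : {k // k ≠ i ∧ k ≠ j}) => x.1 k.1) := by
  classical
  intro z
  let x₀ : ι → K := fun k => if h : k ≠ i ∧ k ≠ j then z ⟨k, h⟩ else 0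
  obtain ⟨s, t, hs, ht⟩ := exists_solution_of_det_ne_zero hd (-F x₀) (-G x₀)
  let x := Function.update (Function.update x₀ i s) j t
  have hoff : ∀ k, k ≠ i → k ≠ j → x k = x₀ k := fun k hi hj => by
    simp only [x, Function.update_of_ne hj, Function.update_of_ne hi]
  have hxi : x i - x₀ i = s := by simp [x, x₀, hij]
  have hxj : x j - x₀ j = t := by simp [x, x₀]
  refine ⟨⟨x, ?_, ?_⟩, funext fun k => ?_⟩
  · linear_combination hF x x₀ hoff + a * hxi + b * hxj + hs
  · linear_combination hG x x₀ hoff + a' * hxi + b' * hxj + ht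
  · simp only [hoff k k.2.1 k.2.2, x₀, dif_pos k.2]

theorem AffineInPair.bijective_restrict (hij : i ≠ j) (hd : a * b' - b * a' ≠ 0)
    (hF : AffineInPair F i j a b) (hG : AffineInPair G i j a' b') :
    Function.Bijective
      (fun (x : {x // F x = 0 ∧ G x = 0}) (k : {k // k ≠ i ∧ k ≠ j}) => x.1 k.1) :=
  ⟨injective_restrict hd hF hG, surjective_restrict hij hd hF hG⟩

end Fibre

theorem Matrix.exists_lt_minor_ne_zero_of_rank_eq_two {K m : Type*} [Field K] [Fintype m]
    [LinearOrder m] {M : Matrix (Fin 2) m K} (hM : M.rank = 2) :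
    ∃ i j, i < j ∧ M 0 i * M 1 j - M 0 j * M 1 i ≠ 0 := by
  have hli : LinearIndependent K M.row := by
    rw [linearIndependent_iff_card_eq_finrank_span, Set.finrank, ← rank_eq_finrank_span_row, hM,
      Fintype.card_fin]
  by_contra! hc
  have hminor : ∀ i j, M 0 i * M 1 j = M 0 j * M 1 i := by
    intro i j
    rcases lt_trichotomy i j with h | rfl | h
    · exact sub_eq_zero.mp (hc i j h)
    · rfl
    · exact (sub_eq_zero.mp (hc j i h)).symm
  obtain ⟨k, hk⟩ := Function.ne_iff.mp (hli.ne_zero 0)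
  refine hk (neg_eq_zero.mp (Fintype.linearIndependent_iff.mp hli ![M 1 k, -M 0 k] ?_ 1))
  funext m
  simp only [row, Finset.sum_apply, Pi.smul_apply, smul_eq_mul, Fin.sum_univ_two, cons_val_zero,
    cons_val_one, cons_val_fin_one, Pi.zero_apply]
  linear_combination hminor m k

theorem Nat.card_subtype_ne_and_ne {α : Type*} [Fintype α] {a b : α} (hab : a ≠ b) :
    Nat.card {k : α // k ≠ a ∧ k ≠ b} = Fintype.card α - 2 := by
  classical
  rw [Nat.card_eq_fintype_card, Fintype.card_subtype, ← Finset.card_pair hab, ← Finset.card_compl]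
  congr 1
  ext k
  simp

theorem fibre_bijection_rank_two_general (n ℓ : ℕ) (h1 : 1 ≤ ℓ) (hn : ℓ ≤ n)
    (η : Fin n → ℂ) (hrank : (Dmat n ℓ h1 hn η).rank = 2) :
    (∃ i j : Fin ℓ, i < j ∧
      η (Fin.castLE hn i) * η (Fin.castLE hn ⟨((j : ℕ) + 1) % ℓ, Nat.mod_lt _ h1⟩) -
        η (Fin.castLE hn j) * η (Fin.castLE hn ⟨((i : ℕ) + 1) % ℓ, Nat.mod_lt _ h1⟩) ≠ 0) ∧
    ∀ i j : Fin ℓ, i < j →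
      η (Fin.castLE hn i) * η (Fin.castLE hn ⟨((j : ℕ) + 1) % ℓ, Nat.mod_lt _ h1⟩) -
        η (Fin.castLE hn j) * η (Fin.castLE hn ⟨((i : ℕ) + 1) % ℓ, Nat.mod_lt _ h1⟩) ≠ 0 →
      Nat.card {k : Fin (n + 1) // k ≠ Fin.castLE (hn.trans n.le_succ) i ∧
        k ≠ Fin.castLE (hn.trans n.le_succ) j} = n - 1 ∧
      Function.Bijective
        (fun (x : {x : Fin (n + 1) → ℂ //
              Ppoly n ℓ hn η x = 0 ∧ Qpoly n ℓ h1 hn η x = 0})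
          (k : {k : Fin (n + 1) // k ≠ Fin.castLE (hn.trans n.le_succ) i ∧
              k ≠ Fin.castLE (hn.trans n.le_succ) j}) => x.1 k.1) := by
  refine ⟨Matrix.exists_lt_minor_ne_zero_of_rank_eq_two hrank, fun i j hij hd => ?_⟩
  have he := Fin.castLE_injective (hn.trans n.le_succ)
  have hij' := he.ne hij.ne
  have hlast (k : Fin ℓ) : Fin.last n ≠ Fin.castLE (hn.trans n.le_succ) k :=
    Fin.ne_of_val_ne (k.2.trans_le hn).ne'
  refine ⟨?_, AffineInPair.bijective_restrict hij' hd ?_ ?_⟩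
  · rw [Nat.card_subtype_ne_and_ne hij', Fintype.card_fin]
    omega
  · exact (AffineInPair.sum_mul_comp he _ hij.ne).add_comp_apply (· ^ 2) (hlast i) (hlast j)
  · exact AffineInPair.sum_mul_comp he _ hij.ne

/-- In Example 2.3 with `ℓ ≥ 2`, if `rank D_η = 2` then some `2 × 2` minor
`η_i·η_{σ(j)} − η_j·η_{σ(i)}` (with `σ` the cyclic shift of `{1,…,ℓ}`, here `0`-based:
`σ(k) = (k+1) mod ℓ`) is nonzero, and for every such pair `i < j`, forgetting the
coordinates `x_i` and `x_j` is a bijection from the fibre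
`F_η = {x ∈ ℂ^{n+1} : P(η,x) = 0, Q(η,x) = 0}` onto `ℂ^{n−1}` (the space of functions on
the remaining `n−1` coordinates). -/
theorem fibre_bijection_rank_two (n ℓ : ℕ) (h1 : 1 ≤ ℓ) (h2 : 2 ≤ ℓ) (hn : ℓ ≤ n)
    (η : Fin n → ℂ) (hrank : (Dmat n ℓ h1 hn η).rank = 2) :
    (∃ i j : Fin ℓ, i < j ∧
      η (Fin.castLE hn i) * η (Fin.castLE hn ⟨((j : ℕ) + 1) % ℓ, Nat.mod_lt _ h1⟩) -
        η (Fin.castLE hn j) * η (Fin.castLE hn ⟨((i : ℕ) + 1) % ℓ, Nat.mod_lt _ h1⟩) ≠ 0) ∧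
    ∀ i j : Fin ℓ, i < j →
      η (Fin.castLE hn i) * η (Fin.castLE hn ⟨((j : ℕ) + 1) % ℓ, Nat.mod_lt _ h1⟩) -
        η (Fin.castLE hn j) * η (Fin.castLE hn ⟨((i : ℕ) + 1) % ℓ, Nat.mod_lt _ h1⟩) ≠ 0 →
      Nat.card {k : Fin (n + 1) // k ≠ Fin.castLE (hn.trans n.le_succ) i ∧
        k ≠ Fin.castLE (hn.trans n.le_succ) j} = n - 1 ∧
      Function.Bijective
        (fun (x : {x : Fin (n + 1) → ℂ //
              Ppoly n ℓ hn η x = 0 ∧ Qpoly n ℓ h1 hn η x = 0})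
          (k : {k : Fin (n + 1) // k ≠ Fin.castLE (hn.trans n.le_succ) i ∧
              k ≠ Fin.castLE (hn.trans n.le_succ) j}) => x.1 k.1) :=
  fibre_bijection_rank_two_general n ℓ h1 hn η hrank
end
end

section
/- Let X and Y be topological spaces and let f : X → Y be a continuous open map. For every integer i ≥ 1, let X^{⟨i⟩} = {x : Fin i → X | f(x j) = f(x k) for all j, k} with the subspace topology of the product topology on X^i, and let f^{⟨i⟩} : X^{⟨i⟩} → Y be given by f^{⟨i⟩}(x) = f(x 0). Then f^{⟨i⟩} is an open map. -/
open Topology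


/-- **Openness of fibred powers.** Let `f : X → Y` be a continuous open map. For `i ≥ 1`,
the `i`-fold fibred power `X^{⟨i⟩} = {x : Fin i → X | f (x j) = f (x k) for all j k}`
(with the subspace topology of the product) maps openly to `Y` via `x ↦ f (x 0)`. -/
theorem openness_of_fibred_power {X Y : Type*} [TopologicalSpace X] [TopologicalSpace Y]
    (f : X → Y) (hfc : Continuous f) (hfo : IsOpenMap f) (i : ℕ) (hi : 1 ≤ i) :
    IsOpenMap (fun p : {x : Fin i → X // ∀ j k, f (x j) = f (x k)} => f (p.1 ⟨0, hi⟩)) := by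
  classical
  apply IsOpenMap.of_nhds_le
  intro p
  rw [Filter.le_map_iff]
  intro t ht
  -- unfold the subtype neighborhood
  obtain ⟨V, hV, hVt⟩ := mem_nhds_subtype _ _ _ |>.mp ht
  obtain ⟨W, hWV, hWopen, hpW⟩ := mem_nhds_iff.mp hV
  obtain ⟨I, u, hu, hIW⟩ := isOpen_pi_iff.mp hWopen p.1 hpW
  set U : Fin i → Set X := fun j => if j ∈ I then u j else Set.univ with hU
  have hUopen : ∀ j, IsOpen (U j) := by
    intro j
    by_cases hj : j ∈ I
    · simp only [hU, if_pos hj]; exact (hu j hj).1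
    · simp only [hU, if_neg hj]; exact isOpen_univ
  have hpU : ∀ j, p.1 j ∈ U j := by
    intro j
    by_cases hj : j ∈ I
    · simp only [hU, if_pos hj]; exact (hu j hj).2
    · simp only [hU, if_neg hj]; trivial
  have hUW : Set.univ.pi U ⊆ W := by
    intro x hx
    apply hIW
    intro j hj
    have := hx j (Set.mem_univ j)
    simp only [hU] at this
    rwa [if_pos (Finset.mem_coe.mp hj)] at this
  -- the candidate open neighborhood of f (p.1 0)
  refine Filter.mem_of_superset
    (show ⋂ j, f '' U j ∈ 𝓝 (f (p.1 ⟨0, hi⟩)) from ?_) ?_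
  · apply (isOpen_iInter_of_finite fun j => hfo _ (hUopen j)).mem_nhds
    exact Set.mem_iInter.mpr fun j => ⟨p.1 j, hpU j, p.2 j ⟨0, hi⟩⟩
  · intro y hy
    simp only [Set.mem_iInter] at hy
    choose x hxU hxf using fun j => hy j
    have hxS : ∀ j k, f (x j) = f (x k) := fun j k => (hxf j).trans (hxf k).symm
    have hxW : x ∈ W := hUW fun j _ => hxU j
    exact ⟨⟨x, hxS⟩, hVt (hWV hxW), hxf _⟩
end
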